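/- arXiv:1202.1785 — 2 statements merged into one kernel-verified Lean document; each statement's English description precedes it below -/
import Mathlib

section
/- Let k ∈ ℂ and z₀ ∈ ℂ. Suppose g, M₁₁, M₂₁ : ℂ → ℂ are real-differentiable at z₀ with g(z₀) ≠ 0, and suppose that at z₀ the equations ∂̄M₁₁(z₀) = Q₁₂(z₀)·M₂₁(z₀) and ∂M₂₁(z₀) + i·k·M₂₁(z₀) = Q₂₁(z₀)·M₁₁(z₀) hold. Then ∂̄(z ↦ M₁₁(z)/g(z) − 1)(z₀) = ∂(z ↦ M₂₁(z)/g(z))(z₀) + i·k·M₂₁(z₀)/g(z₀); that is, ∂̄(g⁻¹M₁₁ − 1) = (∂ + ik)(g⁻¹M₂₁) at z₀. -/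
open Complex

/-- Wirtinger derivative ∂f(z) = (1/2)(Df(z)(1) - i·Df(z)(i)), with Df the real Fréchet derivative. -/
noncomputable def dz (f : ℂ → ℂ) (z : ℂ) : ℂ :=
  (1/2 : ℂ) * (fderiv ℝ f z 1 - Complex.I * fderiv ℝ f z Complex.I)

/-- Wirtinger derivative ∂̄f(z) = (1/2)(Df(z)(1) + i·Df(z)(i)). -/
noncomputable def dzbar (f : ℂ → ℂ) (z : ℂ) : ℂ :=
  (1/2 : ℂ) * (fderiv ℝ f z 1 + Complex.I * fderiv ℝ f z Complex.I)

/-- Matrix potential entry Q₁₂(z) = -∂g(z)/g(z). -/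
noncomputable def Q12 (g : ℂ → ℂ) (z : ℂ) : ℂ := - dz g z / g z

/-- Matrix potential entry Q₂₁(z) = -∂̄g(z)/g(z). -/
noncomputable def Q21 (g : ℂ → ℂ) (z : ℂ) : ℂ := - dzbar g z / g z

/-- The unimodular exponential e(z,k) = exp(i(zk + z̄k̄)). -/
noncomputable def efun (z k : ℂ) : ℂ :=
  Complex.exp (Complex.I * (z * k + (starRingEnd ℂ) z * (starRingEnd ℂ) k))

/-!
By the quotient rule for `∂` and `∂̄`, after multiplying by `g(z₀)²` the claimed identity reads
`g ∂̄M₁₁ − M₁₁ ∂̄g = g ∂M₂₁ − M₂₁ ∂g + i k g M₂₁` at `z₀`, and this is `g` times the difference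
of the two hypotheses once `Q₁₂ = −∂g/g` and `Q₂₁ = −∂̄g/g` are cleared of denominators.
-/

theorem fderiv_div_apply {𝕜 𝕜' E : Type*} [NontriviallyNormedField 𝕜] [NontriviallyNormedField 𝕜']
    [NormedAlgebra 𝕜 𝕜'] [NormedAddCommGroup E] [NormedSpace 𝕜 E] {f g : E → 𝕜'} {x : E}
    (hf : DifferentiableAt 𝕜 f x) (hg : DifferentiableAt 𝕜 g x) (hx : g x ≠ 0) (v : E) :
    fderiv 𝕜 (fun y => f y / g y) x v
      = (fderiv 𝕜 f x v * g x - f x * fderiv 𝕜 g x v) / g x ^ 2 := by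
  have hinv : HasFDerivAt (fun y => (g y)⁻¹) _ x :=
    (hasFDerivAt_inv' (𝕜 := 𝕜) hx).comp x hg.hasFDerivAt
  simp only [div_eq_mul_inv]
  rw [(hf.hasFDerivAt.fun_mul hinv).fderiv]
  simp only [ContinuousLinearMap.neg_comp, smul_neg, add_apply, neg_apply, smul_apply,
    ContinuousLinearMap.comp_apply, ContinuousLinearMap.mulLeftRight_apply, smul_eq_mul]
  field_simp
  ring

theorem dz_div {f g : ℂ → ℂ} {z : ℂ} (hf : DifferentiableAt ℝ f z) (hg : DifferentiableAt ℝ g z)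
    (hz : g z ≠ 0) :
    dz (fun w => f w / g w) z = (dz f z * g z - f z * dz g z) / g z ^ 2 := by
  simp only [dz, fderiv_div_apply hf hg hz]
  field_simp
  ring

theorem dzbar_div {f g : ℂ → ℂ} {z : ℂ} (hf : DifferentiableAt ℝ f z)
    (hg : DifferentiableAt ℝ g z) (hz : g z ≠ 0) :
    dzbar (fun w => f w / g w) z = (dzbar f z * g z - f z * dzbar g z) / g z ^ 2 := by
  simp only [dzbar, fderiv_div_apply hf hg hz]
  field_simp
  ring

theorem dzbar_sub_const (f : ℂ → ℂ) (c z : ℂ) : dzbar (fun w => f w - c) z = dzbar f z := by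
  simp only [dzbar, fderiv_sub_const]

theorem stmt0 (k z₀ : ℂ) (g M₁₁ M₂₁ : ℂ → ℂ)
    (hg : DifferentiableAt ℝ g z₀)
    (hM11 : DifferentiableAt ℝ M₁₁ z₀)
    (hM21 : DifferentiableAt ℝ M₂₁ z₀)
    (hg0 : g z₀ ≠ 0)
    (h1 : dzbar M₁₁ z₀ = Q12 g z₀ * M₂₁ z₀)
    (h2 : dz M₂₁ z₀ + Complex.I * k * M₂₁ z₀ = Q21 g z₀ * M₁₁ z₀) :
    dzbar (fun z => M₁₁ z / g z - 1) z₀ =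
      dz (fun z => M₂₁ z / g z) z₀ + Complex.I * k * M₂₁ z₀ / g z₀ := by
  rw [dzbar_sub_const, dzbar_div hM11 hg hg0, dz_div hM21 hg hg0]
  simp only [Q12, Q21] at h1 h2
  field_simp at h1 h2 ⊢
  linear_combination h1 - h2
end

section
/- Let z₀ ∈ ℂ. Suppose u : ℂ → ℂ is real-differentiable in a neighborhood of z₀, its Wirtinger derivatives ∂u and ∂̄u (as functions of z) are real-differentiable at z₀, and the mixed Wirtinger derivatives agree at z₀: ∂̄(∂u)(z₀) = ∂(∂̄u)(z₀). Suppose g : ℂ → ℂ is real-differentiable at z₀ with g(z₀) ≠ 0, and set γ = g². Then the following are equivalent: (i) ∂(z ↦ γ(z)·∂̄u(z))(z₀) + ∂̄(z ↦ γ(z)·∂u(z))(z₀) = 0 (the generalized Laplace equation ∇·(γ∇u) = 0 at z₀ in Wirtinger form); (ii) ∂̄(z ↦ g(z)·∂u(z))(z₀) = Q₁₂(z₀)·g(z₀)·∂̄u(z₀); (iii) ∂(z ↦ g(z)·∂̄u(z))(z₀) = Q₂₁(z₀)·g(z₀)·∂u(z₀). In other words, setting v = γ^{1/2}∂u and w =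 γ^{1/2}∂̄u, the pair (v,w) satisfies the first-order system ∂̄v = Q₁₂w, ∂w = Q₂₁v at z₀ if and only if u satisfies the admittivity equation at z₀. -/
open Complex

/-!
Both Wirtinger derivatives obey the Leibniz rule. Expanding with it, and using `∂̄∂u = ∂∂̄u`, each of
the three conditions reduces to the vanishing of `∂g·∂̄u + ∂̄g·∂u + g·∂∂̄u`: condition (i) is that
quantity times `2g`, while in (ii) and (iii) the potential term `Q·g` equals `-∂g` resp. `-∂̄g` and
cancels the cross term of the Leibniz expansion. Since `g(z₀) ≠ 0`, all three are equivalent.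
-/

section Wirtinger

variable {f h u g : ℂ → ℂ} {z : ℂ}

lemma dz_mul (hf : DifferentiableAt ℝ f z) (hh : DifferentiableAt ℝ h z) :
    dz (fun w => f w * h w) z = dz f z * h z + f z * dz h z := by
  simp only [dz, fderiv_fun_mul hf hh, add_apply, smul_apply, smul_eq_mul]
  ring

lemma dzbar_mul (hf : DifferentiableAt ℝ f z) (hh : DifferentiableAt ℝ h z) :
    dzbar (fun w => f w * h w) z = dzbar f z * h z + f z * dzbar h z := by
  simp only [dzbar, fderiv_fun_mul hf hh, add_apply, smul_apply, smul_eq_mul]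
  ring

lemma Q12_mul_self (hg0 : g z ≠ 0) : Q12 g z * g z = -dz g z :=
  div_mul_cancel₀ _ hg0

lemma Q21_mul_self (hg0 : g z ≠ 0) : Q21 g z * g z = -dzbar g z :=
  div_mul_cancel₀ _ hg0

lemma dz_sq_mul_dzbar_add_dzbar_sq_mul_dz (hg : DifferentiableAt ℝ g z)
    (hdu : DifferentiableAt ℝ (dz u) z) (hdbaru : DifferentiableAt ℝ (dzbar u) z)
    (hmixed : dzbar (dz u) z = dz (dzbar u) z) :
    dz (fun w => (g w * g w) * dzbar u w) z + dzbar (fun w => (g w * g w) * dz u w) z =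
      2 * g z * (dz g z * dzbar u z + dzbar g z * dz u z + g z * dz (dzbar u) z) := by
  have hgg : DifferentiableAt ℝ (fun w => g w * g w) z := hg.mul hg
  rw [dz_mul hgg hdbaru, dzbar_mul hgg hdu, dz_mul hg hg, dzbar_mul hg hg, hmixed]
  ring

lemma dzbar_mul_dz_sub_Q12 (hg : DifferentiableAt ℝ g z) (hdu : DifferentiableAt ℝ (dz u) z)
    (hmixed : dzbar (dz u) z = dz (dzbar u) z) (hg0 : g z ≠ 0) :
    dzbar (fun w => g w * dz u w) z - Q12 g z * (g z * dzbar u z) =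
      dz g z * dzbar u z + dzbar g z * dz u z + g z * dz (dzbar u) z := by
  rw [dzbar_mul hg hdu, hmixed, ← mul_assoc, Q12_mul_self hg0]
  ring

lemma dz_mul_dzbar_sub_Q21 (hg : DifferentiableAt ℝ g z) (hdbaru : DifferentiableAt ℝ (dzbar u) z)
    (hg0 : g z ≠ 0) :
    dz (fun w => g w * dzbar u w) z - Q21 g z * (g z * dz u z) =
      dz g z * dzbar u z + dzbar g z * dz u z + g z * dz (dzbar u) z := by
  rw [dz_mul hg hdbaru, ← mul_assoc, Q21_mul_self hg0]
  ring

end Wirtinger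

theorem stmt2_general (z₀ : ℂ) (u g : ℂ → ℂ)
    (hdu : DifferentiableAt ℝ (dz u) z₀)
    (hdbaru : DifferentiableAt ℝ (dzbar u) z₀)
    (hmixed : dzbar (dz u) z₀ = dz (dzbar u) z₀)
    (hg : DifferentiableAt ℝ g z₀)
    (hg0 : g z₀ ≠ 0) :
    List.TFAE
      [ dz (fun z => (g z * g z) * dzbar u z) z₀ +
          dzbar (fun z => (g z * g z) * dz u z) z₀ = 0,
        dzbar (fun z => g z * dz u z) z₀ = Q12 g z₀ * (g z₀ * dzbar u z₀),
        dz (fun z => g z * dzbar u z) z₀ = Q21 g z₀ * (g z₀ * dz u z₀) ] := by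
  set E := dz g z₀ * dzbar u z₀ + dzbar g z₀ * dz u z₀ + g z₀ * dz (dzbar u) z₀
  have laplace_iff : dz (fun z => (g z * g z) * dzbar u z) z₀ +
      dzbar (fun z => (g z * g z) * dz u z) z₀ = 0 ↔ E = 0 := by
    rw [dz_sq_mul_dzbar_add_dzbar_sq_mul_dz hg hdu hdbaru hmixed]
    simp [E, hg0]
  have dzbar_iff : dzbar (fun z => g z * dz u z) z₀ = Q12 g z₀ * (g z₀ * dzbar u z₀) ↔ E = 0 := by
    rw [← sub_eq_zero, dzbar_mul_dz_sub_Q12 hg hdu hmixed hg0]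
  have dz_iff : dz (fun z => g z * dzbar u z) z₀ = Q21 g z₀ * (g z₀ * dz u z₀) ↔ E = 0 := by
    rw [← sub_eq_zero, dz_mul_dzbar_sub_Q21 hg hdbaru hg0]
  tfae_have 1 ↔ 2 := laplace_iff.trans dzbar_iff.symm
  tfae_have 1 ↔ 3 := laplace_iff.trans dz_iff.symm
  tfae_finish

theorem stmt2 (z₀ : ℂ) (u g : ℂ → ℂ)
    (hu : ∀ᶠ z in nhds z₀, DifferentiableAt ℝ u z)
    (hdu : DifferentiableAt ℝ (dz u) z₀)
    (hdbaru : DifferentiableAt ℝ (dzbar u) z₀)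
    (hmixed : dzbar (dz u) z₀ = dz (dzbar u) z₀)
    (hg : DifferentiableAt ℝ g z₀)
    (hg0 : g z₀ ≠ 0) :
    List.TFAE
      [ dz (fun z => (g z * g z) * dzbar u z) z₀ +
          dzbar (fun z => (g z * g z) * dz u z) z₀ = 0,
        dzbar (fun z => g z * dz u z) z₀ = Q12 g z₀ * (g z₀ * dzbar u z₀),
        dz (fun z => g z * dzbar u z) z₀ = Q21 g z₀ * (g z₀ * dz u z₀) ] :=
  stmt2_general z₀ u g hdu hdbaru hmixed hg hg0
end
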